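/- For every tree T (a finite connected acyclic simple graph with at least one vertex), b*(T) = m*(T) + 1. -/

import Mathlib

variable {V : Type*} {W : Type*}

/-- A proper coloring of `G` using colors `{1, …, k}`: colors lie in `{1,…,k}`,
adjacent vertices get different colors, and every color in `{1,…,k}` is used. -/
def IsProperKColoring (G : SimpleGraph V) (k : ℕ) (c : V → ℕ) : Prop :=
  (∀ v, c v ∈ Set.Icc 1 k) ∧
  (∀ u v, G.Adj u v → c u ≠ c v) ∧
  (∀ j ∈ Set.Icc 1 k, ∃ v, c v = j)

/-- `u` is a b-vertex: every color `j ∈ {1,…,k}` with `j ≠ c u` appears on a neighbor of `u`. -/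
def IsBVertex (G : SimpleGraph V) (k : ℕ) (c : V → ℕ) (u : V) : Prop :=
  ∀ j ∈ Set.Icc 1 k, j ≠ c u → ∃ w, G.Adj u w ∧ c w = j

/-- `u` is a nice vertex: it is a b-vertex and for every color `j ≠ c u` in `{1,…,k}`
it has a b-vertex neighbor of color `j`. -/
def IsNiceVertex (G : SimpleGraph V) (k : ℕ) (c : V → ℕ) (u : V) : Prop :=
  IsBVertex G k c u ∧
  ∀ j ∈ Set.Icc 1 k, j ≠ c u → ∃ w, G.Adj u w ∧ c w = j ∧ IsBVertex G k c w

/-- A Grundy coloring using `k` colors: proper, and every vertex of color `j` has a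
neighbor of each smaller color `i ≥ 1`. -/
def IsGrundyColoring (G : SimpleGraph V) (k : ℕ) (c : V → ℕ) : Prop :=
  IsProperKColoring G k c ∧
  ∀ i j : ℕ, 1 ≤ i → i < j → j ≤ k → ∀ v, c v = j → ∃ w, G.Adj v w ∧ c w = i

/-- A z-coloring: a Grundy coloring with a nice vertex of (top) color `k`. -/
def IsZColoring (G : SimpleGraph V) (k : ℕ) (c : V → ℕ) : Prop :=
  IsGrundyColoring G k c ∧ ∃ u, c u = k ∧ IsNiceVertex G k c u

/-- A b*-coloring: a proper coloring with a nice vertex of (top) color `k`. -/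
def IsBStarColoring (G : SimpleGraph V) (k : ℕ) (c : V → ℕ) : Prop :=
  IsProperKColoring G k c ∧ ∃ u, c u = k ∧ IsNiceVertex G k c u

/-- The z-chromatic number: largest `k` admitting a z-coloring with `k` colors. -/
noncomputable def zNum (G : SimpleGraph V) : ℕ :=
  sSup {k | ∃ c : V → ℕ, IsZColoring G k c}

/-- The b*-chromatic number: largest `k` admitting a b*-coloring with `k` colors. -/
noncomputable def bStar (G : SimpleGraph V) : ℕ :=
  sSup {k | ∃ c : V → ℕ, IsBStarColoring G k c}

/-- `m*(G)`: the largest `k` such that some vertex `u` has `k` distinct neighbors,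
each of degree at least `k`. -/
noncomputable def mStar (G : SimpleGraph V) : ℕ :=
  sSup {k | ∃ (u : V) (s : Finset V), (↑s : Set V) ⊆ G.neighborSet u ∧ s.card = k ∧
    ∀ v ∈ s, k ≤ (G.neighborSet v).ncard}

/-- The clique number `ω(G)`. -/
noncomputable def omegaNum (G : SimpleGraph V) : ℕ :=
  sSup {n | ∃ s : Finset V, G.IsNClique n s}

/-!
Upper bound, for any finite graph: the nice vertex of a b*-colouring with `k` colours has `k - 1`
neighbours that are b-vertices of distinct colours, and a b-vertex has degree at least `k - 1`;
hence `k - 1 ≤ m*`.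

Lower bound, for a tree `T`: take `u` with `m = m*(T)` neighbours `w₁, …, w_m` of degree `≥ m`.
Root `T` at `u`, colour `u` with `m + 1` and `wᵢ` with `i`; each `wᵢ` has at least `m - 1` children,
which receive the colours `{1, …, m} \ {i}`; every other vertex gets colour `1` or `2`, different
from its parent's. In a tree every edge joins a vertex to its parent, so the colouring is proper, and
`u` is a nice vertex.
-/

open Finset

theorem Finset.exists_surjOn_of_card_le {α β : Type*} {A : Finset α} {B : Finset β}
    (h : #B ≤ #A) (b₀ : β) : ∃ f : α → β, (∀ x, f x = b₀ ∨ f x ∈ B) ∧ Set.SurjOn f A B := by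
  classical
  obtain ⟨t, htA, ht⟩ := exists_subset_card_eq h
  let e := equivOfCardEq ht
  refine ⟨fun x => if hx : x ∈ t then e ⟨x, hx⟩ else b₀, fun x => ?_, fun b hb => ?_⟩
  · by_cases hx : x ∈ t
    · exact .inr (by simp [hx])
    · exact .inl (by simp [hx])
  · refine ⟨e.symm ⟨b, hb⟩, htA (e.symm ⟨b, hb⟩).2, ?_⟩
    simp

namespace SimpleGraph

variable {G : SimpleGraph V} {u a a' b : V}

theorem Connected.exists_adj_dist_lt (hG : G.Connected) (hb : b ≠ u) :
    ∃ a, G.Adj a b ∧ G.dist u a < G.dist u b := by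
  obtain ⟨p, -, hp⟩ := hG.exists_path_of_dist b u
  have hnil : ¬p.Nil := Walk.not_nil_of_ne hb
  refine ⟨p.snd, (p.adj_snd hnil).symm, ?_⟩
  calc G.dist u p.snd = G.dist p.snd u := dist_comm
    _ ≤ p.tail.length := dist_le _
    _ < p.length := by rw [← p.length_tail_add_one hnil]; omega
    _ = G.dist u b := hp.trans dist_comm

theorem IsTree.eq_penultimate_of_adj_of_dist_lt (hG : G.IsTree) {p : G.Walk u b} (hp : p.IsPath)
    (hab : G.Adj a b) (h : G.dist u a < G.dist u b) : a = p.penultimate := by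
  obtain ⟨q, hq, hqa⟩ := hG.connected.exists_path_of_dist u a
  classical
  have hb : b ∉ q.support := fun hb => by
    have := (dist_le (q.takeUntil b hb)).trans (q.length_takeUntil_le_length hb)
    omega
  exact hG.isAcyclic.eq_penultimate_of_adj_end hp hab.symm
    (hG.isAcyclic.mem_support_of_ne_mem_support_of_adj_of_isPath hp hq hab.symm hb)

theorem IsTree.eq_of_adj_of_dist_lt (hG : G.IsTree) (ha : G.Adj a b) (ha' : G.Adj a' b)
    (h : G.dist u a < G.dist u b) (h' : G.dist u a' < G.dist u b) : a = a' := by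
  obtain ⟨p, hp, -⟩ := hG.connected.exists_path_of_dist u b
  rw [hG.eq_penultimate_of_adj_of_dist_lt hp ha h, hG.eq_penultimate_of_adj_of_dist_lt hp ha' h']

open Classical in
/-- Definition by recursion down a tree rooted at `u`: the value at `v` is `F v p x`, where `p` is
the parent of `v` (its neighbour closer to `u`) and `x` the value at `p`. -/
noncomputable def rootedRec {α : Type*} (G : SimpleGraph V) (u : V) (r : α) (F : V → V → α → α)
    (v : V) : α :=
  if h : ∃ a, G.Adj a v ∧ G.dist u a < G.dist u v then
    F v h.choose (G.rootedRec u r F h.choose)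
  else r
termination_by G.dist u v
decreasing_by exact h.choose_spec.2

variable {α : Type*} {r : α} {F : V → V → α → α}

theorem rootedRec_self : G.rootedRec u r F u = r := by
  rw [rootedRec, dif_neg (by simp)]

theorem IsTree.rootedRec_of_adj (hG : G.IsTree) (hab : G.Adj a b)
    (h : G.dist u a < G.dist u b) : G.rootedRec u r F b = F b a (G.rootedRec u r F a) := by
  have hex : ∃ a, G.Adj a b ∧ G.dist u a < G.dist u b := ⟨a, hab, h⟩
  rw [rootedRec, dif_pos hex,
    hG.eq_of_adj_of_dist_lt hex.choose_spec.1 hab hex.choose_spec.2 h]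

end SimpleGraph

open SimpleGraph

theorem IsBVertex.le_ncard_neighborSet {G : SimpleGraph V} {k : ℕ} {c : V → ℕ} {v : V}
    [Finite (G.neighborSet v)] (hv : IsBVertex G k c v) : k - 1 ≤ (G.neighborSet v).ncard := by
  have hsub : (((Icc 1 k).erase (c v) : Finset ℕ) : Set ℕ) ⊆ c '' G.neighborSet v := by
    intro j hj
    simp only [coe_erase, coe_Icc, Set.mem_sdiff, Set.mem_singleton_iff] at hj
    obtain ⟨w, hvw, rfl⟩ := hv j hj.1 hj.2
    exact ⟨w, hvw, rfl⟩
  calc k - 1 = #(Icc 1 k) - 1 := by simp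
    _ ≤ #((Icc 1 k).erase (c v)) := pred_card_le_card_erase
    _ ≤ (c '' G.neighborSet v).ncard := by
        rw [← Set.ncard_coe_finset]; exact Set.ncard_le_ncard hsub
    _ ≤ (G.neighborSet v).ncard := Set.ncard_image_le

theorem mStar_set_bddAbove [Finite V] (G : SimpleGraph V) :
    BddAbove {k | ∃ (u : V) (s : Finset V), (↑s : Set V) ⊆ G.neighborSet u ∧ s.card = k ∧
      ∀ v ∈ s, k ≤ (G.neighborSet v).ncard} := by
  have := Fintype.ofFinite V
  refine ⟨Fintype.card V, ?_⟩
  rintro k ⟨_, s, _, rfl, _⟩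
  exact card_le_univ s

theorem exists_mStar_witness [Finite V] [Nonempty V] (G : SimpleGraph V) :
    ∃ (u : V) (s : Finset V), (↑s : Set V) ⊆ G.neighborSet u ∧ s.card = mStar G ∧
      ∀ v ∈ s, mStar G ≤ (G.neighborSet v).ncard :=
  Nat.sSup_mem ⟨0, by exact ⟨Classical.arbitrary V, ∅, by simp⟩⟩ (mStar_set_bddAbove G)

theorem le_mStar [Finite V] {G : SimpleGraph V} {u : V} {B : Set V} {k : ℕ}
    (hB : B ⊆ G.neighborSet u) (hk : k ≤ B.ncard) (hdeg : ∀ v ∈ B, k ≤ (G.neighborSet v).ncard) :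
    k ≤ mStar G := by
  obtain ⟨t, htB, rfl⟩ := Set.exists_subset_card_eq hk
  refine le_csSup (mStar_set_bddAbove G) ⟨u, t.toFinite.toFinset, ?_, ?_, ?_⟩
  · simpa using htB.trans hB
  · exact (Set.ncard_eq_toFinset_card _ _).symm
  · simpa using fun v hv => hdeg v (htB hv)

theorem one_le_mStar_of_adj [Finite V] {G : SimpleGraph V} {a b : V} (hab : G.Adj a b) :
    1 ≤ mStar G :=
  le_mStar (B := {b}) (by simpa using hab) (by simp) fun v hv => by
    rw [Set.mem_singleton_iff.mp hv, Nat.one_le_iff_ne_zero, ← Nat.pos_iff_ne_zero, Set.ncard_pos]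
    exact ⟨a, hab.symm⟩

theorem IsBStarColoring.le_mStar_add_one [Finite V] {G : SimpleGraph V} {k : ℕ} {c : V → ℕ}
    (h : IsBStarColoring G k c) : k ≤ mStar G + 1 := by
  obtain ⟨-, u, hcu, -, hnice⟩ := h
  have hsub : ((Icc 1 (k - 1) : Finset ℕ) : Set ℕ) ⊆ c '' {w | G.Adj u w ∧ IsBVertex G k c w} := by
    intro j hj
    simp only [coe_Icc, Set.mem_Icc] at hj
    obtain ⟨w, huw, rfl, hw⟩ := hnice j ⟨hj.1, by omega⟩ (by omega)
    exact ⟨w, ⟨huw, hw⟩, rfl⟩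
  have := le_mStar (k := k - 1) (B := {w | G.Adj u w ∧ IsBVertex G k c w}) (fun w hw => hw.1) (by
    calc k - 1 = #(Icc 1 (k - 1)) := by simp
      _ ≤ _ := by rw [← Set.ncard_coe_finset]; exact Set.ncard_le_ncard hsub
      _ ≤ _ := Set.ncard_image_le) fun w hw => hw.2.le_ncard_neighborSet
  omega

section StarColoring

variable {T : SimpleGraph V} {u a b w x : V} {s : Finset V} {m : ℕ} {σ : V → ℕ} {κ : V → V → ℕ}

open Classical in
noncomputable def starColoring (T : SimpleGraph V) (u : V) (s : Finset V) (m : ℕ) (σ : V → ℕ)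
    (κ : V → V → ℕ) : V → ℕ :=
  T.rootedRec u (m + 1) fun v p x =>
    if v ∈ s then σ v else if p ∈ s then κ p v else if x = 1 then 2 else 1

theorem starColoring_self : starColoring T u s m σ κ u = m + 1 :=
  SimpleGraph.rootedRec_self

open Classical in
theorem starColoring_of_adj (hT : T.IsTree) (hab : T.Adj a b) (h : T.dist u a < T.dist u b) :
    starColoring T u s m σ κ b = if b ∈ s then σ b else if a ∈ s then κ a b
      else if starColoring T u s m σ κ a = 1 then 2 else 1 := by
  rw [starColoring, hT.rootedRec_of_adj hab h]

theorem starColoring_of_mem (hT : T.IsTree) (hs : (↑s : Set V) ⊆ T.neighborSet u) (hw : w ∈ s) :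
    starColoring T u s m σ κ w = σ w := by
  rw [starColoring_of_adj hT (hs hw) (by simp [dist_eq_one_iff_adj.mpr (hs hw)]), if_pos hw]

theorem starColoring_of_adj_mem (hT : T.IsTree) (hs : (↑s : Set V) ⊆ T.neighborSet u)
    (hw : w ∈ s) (hwx : T.Adj w x) (hxu : x ≠ u) : starColoring T u s m σ κ x = κ w x := by
  have hw1 : T.dist u w = 1 := dist_eq_one_iff_adj.mpr (hs hw)
  have hx : T.dist u x = 2 := by
    have := hT.dist_eq_dist_add_one_of_adj u hwx
    have := hT.connected.pos_dist_of_ne hxu.symm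
    omega
  have hxs : x ∉ s := fun hxs => by simp [dist_eq_one_iff_adj.mpr (hs hxs)] at hx
  rw [starColoring_of_adj hT hwx (by omega), if_neg hxs, if_pos hw]

theorem starColoring_ne_of_adj (hT : T.IsTree) (hs : (↑s : Set V) ⊆ T.neighborSet u)
    (hσ : ∀ w ∈ s, σ w ≤ m) (hκ : ∀ w ∈ s, ∀ x, κ w x ≠ σ w) (hab : T.Adj a b) :
    starColoring T u s m σ κ a ≠ starColoring T u s m σ κ b := by
  wlog h : T.dist u a < T.dist u b generalizing a b
  · have hne := hT.dist_ne_of_adj u hab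
    exact (this hab.symm (by omega)).symm
  rw [starColoring_of_adj hT hab h]
  split_ifs with hb ha
  · have hau : a = u := by
      rw [dist_eq_one_iff_adj.mpr (hs hb), Nat.lt_one_iff, hT.connected.dist_eq_zero_iff] at h
      exact h.symm
    rw [hau, starColoring_self]
    have := hσ b hb
    omega
  · rw [starColoring_of_mem hT hs ha]
    exact (hκ a ha b).symm
  · omega
  · omega

theorem starColoring_mem_Icc (hT : T.IsTree) (hσ : ∀ w ∈ s, σ w ∈ Set.Icc 1 m)
    (hκ : ∀ w ∈ s, ∀ x, κ w x ∈ Set.Icc 1 (m + 1)) (hm : ∀ a b, T.Adj a b → 1 ≤ m) (v : V) :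
    starColoring T u s m σ κ v ∈ Set.Icc 1 (m + 1) := by
  by_cases hvu : v = u
  · simp [hvu, starColoring_self]
  obtain ⟨a, hav, h⟩ := hT.connected.exists_adj_dist_lt hvu
  have := hm a v hav
  rw [starColoring_of_adj hT hav h]
  split_ifs with hv ha
  · exact Set.Icc_subset_Icc_right m.le_succ (hσ v hv)
  · exact hκ a ha v
  all_goals simp only [Set.mem_Icc]; omega

theorem starColoring_isBVertex (hT : T.IsTree) (hs : (↑s : Set V) ⊆ T.neighborSet u)
    (hw : w ∈ s) (hκ : ∀ i ∈ Set.Icc 1 m, i ≠ σ w → ∃ x, T.Adj w x ∧ x ≠ u ∧ κ w x = i) :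
    IsBVertex T (m + 1) (starColoring T u s m σ κ) w := by
  intro i hi hiw
  rw [starColoring_of_mem hT hs hw] at hiw
  by_cases him : i = m + 1
  · exact ⟨u, (hs hw).symm, by rw [starColoring_self, him]⟩
  obtain ⟨x, hwx, hxu, rfl⟩ := hκ i ⟨hi.1, by have := hi.2; omega⟩ hiw
  exact ⟨x, hwx, starColoring_of_adj_mem hT hs hw hwx hxu⟩

theorem starColoring_isNiceVertex (hT : T.IsTree) (hs : (↑s : Set V) ⊆ T.neighborSet u)
    (hσ : ∀ j ∈ Set.Icc 1 m, ∃ w ∈ s, σ w = j)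
    (hκ : ∀ w ∈ s, ∀ i ∈ Set.Icc 1 m, i ≠ σ w → ∃ x, T.Adj w x ∧ x ≠ u ∧ κ w x = i) :
    IsNiceVertex T (m + 1) (starColoring T u s m σ κ) u := by
  have key : ∀ j ∈ Set.Icc 1 (m + 1), j ≠ starColoring T u s m σ κ u →
      ∃ w, T.Adj u w ∧ starColoring T u s m σ κ w = j ∧
        IsBVertex T (m + 1) (starColoring T u s m σ κ) w := by
    intro j hj hju
    rw [starColoring_self] at hju
    obtain ⟨w, hw, rfl⟩ := hσ j ⟨hj.1, by have := hj.2; omega⟩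
    exact ⟨w, hs hw, starColoring_of_mem hT hs hw, starColoring_isBVertex hT hs hw (hκ w hw)⟩
  exact ⟨fun j hj hju => (key j hj hju).imp fun _ h => ⟨h.1, h.2.1⟩, key⟩

end StarColoring

theorem exists_childColoring [Finite V] {T : SimpleGraph V} {u w : V} {m j : ℕ}
    (hj : j ∈ Set.Icc 1 m) (huw : T.Adj u w) (hdeg : m ≤ (T.neighborSet w).ncard) :
    ∃ f : V → ℕ, (∀ x, f x ∈ Set.Icc 1 (m + 1) ∧ f x ≠ j) ∧
      ∀ i ∈ Set.Icc 1 m, i ≠ j → ∃ x, T.Adj w x ∧ x ≠ u ∧ f x = i := by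
  obtain ⟨hj1, hjm⟩ := hj
  have hcard : #((Icc 1 m).erase j) ≤ #(T.neighborSet w \ {u}).toFinite.toFinset := by
    rw [← Set.ncard_eq_toFinset_card,
      Set.ncard_sdiff_singleton_of_mem (show u ∈ T.neighborSet w from huw.symm),
      card_erase_of_mem (by simp [hj1, hjm]), Nat.card_Icc]
    omega
  obtain ⟨f, hf, hsurj⟩ := exists_surjOn_of_card_le hcard (m + 1)
  refine ⟨f, fun x => ?_, fun i ⟨hi1, him⟩ hij => ?_⟩
  · rcases hf x with h | h
    · simp only [Set.mem_Icc, h]; omega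
    · simp only [mem_erase, mem_Icc] at h
      exact ⟨⟨h.2.1, by omega⟩, h.1⟩
  · obtain ⟨x, hx, rfl⟩ := hsurj (a := i) (by simp [hij, hi1, him])
    simp only [Set.Finite.coe_toFinset, Set.mem_sdiff, Set.mem_singleton_iff] at hx
    exact ⟨x, hx.1, hx.2, rfl⟩

theorem IsTree.exists_isBStarColoring_mStar_add_one [Finite V] {T : SimpleGraph V}
    (hT : T.IsTree) : ∃ c, IsBStarColoring T (mStar T + 1) c := by
  have := hT.connected.nonempty
  obtain ⟨u, s, hs, hcard, hdeg⟩ := exists_mStar_witness T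
  set m := mStar T
  obtain ⟨σ, hσval, hσon⟩ := exists_surjOn_of_card_le (A := s) (B := Icc 1 m) (by simp [hcard]) 1
  have hσ : ∀ w ∈ s, σ w ∈ Set.Icc 1 m := fun w hw => by
    have : 0 < m := hcard ▸ card_pos.mpr ⟨w, hw⟩
    rcases hσval w with h | h
    · simp only [Set.mem_Icc, h]; omega
    · simpa using h
  have hσsurj : ∀ j ∈ Set.Icc 1 m, ∃ w ∈ s, σ w = j := fun j hj => by
    obtain ⟨w, hw, rfl⟩ := hσon (a := j) (by simpa using hj)
    exact ⟨w, hw, rfl⟩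
  choose! κ hκ hκsurj using fun w hw => exists_childColoring (hσ w hw) (hs hw) (hdeg w hw)
  refine ⟨starColoring T u s m σ κ, ⟨starColoring_mem_Icc hT hσ (fun w hw x => (hκ w hw x).1)
    (fun _ _ => one_le_mStar_of_adj), fun _ _ => starColoring_ne_of_adj hT hs
    (fun w hw => (hσ w hw).2) (fun w hw x => (hκ w hw x).2), fun j hj => ?_⟩,
    u, starColoring_self, starColoring_isNiceVertex hT hs hσsurj hκsurj⟩
  rcases eq_or_ne j (m + 1) with rfl | hjm
  · exact ⟨u, starColoring_self⟩
  obtain ⟨w, hw, rfl⟩ := hσsurj j ⟨hj.1, by have := hj.2; omega⟩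
  exact ⟨w, starColoring_of_mem hT hs hw⟩

theorem tree_bStar_eq_mStar_add_one [Fintype V]
    (T : SimpleGraph V) (hconn : T.Connected) (hacyc : T.IsAcyclic) :
    bStar T = mStar T + 1 := by
  obtain ⟨c, hc⟩ := IsTree.exists_isBStarColoring_mStar_add_one ⟨hconn, hacyc⟩
  have hub : ∀ k ∈ {k | ∃ c : V → ℕ, IsBStarColoring T k c}, k ≤ mStar T + 1 :=
    fun _ ⟨_, hc⟩ => hc.le_mStar_add_one
  exact le_antisymm (csSup_le ⟨_, c, hc⟩ hub) (le_csSup ⟨_, hub⟩ ⟨c, hc⟩)
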